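/- arXiv:2306.12316 — 6 statements merged into one kernel-verified Lean document; each statement's English description precedes it below -/
import Mathlib

section
/- Let C, P, Q, a, b be as in the context. Then the composite λ_P ∘ (a ⊗ id_P) : P ⊗ P → 𝟙 ⊗ P → P is an isomorphism (λ denoting the left unitor), the composite ρ_P ∘ (id_P ⊗ a) : P ⊗ P → P ⊗ 𝟙 → P is an isomorphism (ρ the right unitor), and likewise the composites (b ⊗ id_Q) ∘ λ_Q⁻¹ : Q → 𝟙 ⊗ Q → Q ⊗ Q and (id_Q ⊗ b) ∘ ρ_Q⁻¹ : Q → Q ⊗ 𝟙 → Q ⊗ Q are isomorphisms. (Abstract form of Lemma 2.8(1) and of the idempotence P_U ⋆ P_U ≅ P_U, Q_U ≅ Q_U ⋆ Q_U of microlocal kernels.) -/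
/-!
Abstract form of Lemma 2.8(1) / idempotence of microlocal kernels.

`C` is a category carrying both a monoidal structure (unit `𝟙_ C`, tensor `⊗`) and a
pretriangulated structure, such that for every object `X` the functors `X ⊗ -` and `- ⊗ X`
commute with the shift and send distinguished triangles to distinguished triangles.
Given a distinguished triangle `P ⟶ 𝟙 ⟶ Q ⟶ P⟦1⟧` with `P ⊗ Q ≅ 0` and `Q ⊗ P ≅ 0`,
the composites `P ⊗ P ⟶ 𝟙 ⊗ P ⟶ P`, `P ⊗ P ⟶ P ⊗ 𝟙 ⟶ P`, `Q ⟶ 𝟙 ⊗ Q ⟶ Q ⊗ Q` and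
`Q ⟶ Q ⊗ 𝟙 ⟶ Q ⊗ Q` are isomorphisms.
-/

open CategoryTheory Category Limits Pretriangulated MonoidalCategory

theorem microlocal_kernel_idempotence
    {C : Type*} [Category C] [MonoidalCategory C]
    [Preadditive C] [HasZeroObject C] [HasShift C ℤ]
    [∀ n : ℤ, (shiftFunctor C n).Additive] [Pretriangulated C]
    [∀ X : C, (tensorLeft X).CommShift ℤ] [∀ X : C, (tensorRight X).CommShift ℤ]
    [∀ X : C, (tensorLeft X).IsTriangulated] [∀ X : C, (tensorRight X).IsTriangulated]
    (P Q : C) (a : P ⟶ 𝟙_ C) (b : 𝟙_ C ⟶ Q) (δ : Q ⟶ P⟦(1 : ℤ)⟧)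
    (hT : Triangle.mk a b δ ∈ distTriang C)
    (hPQ : IsZero (P ⊗ Q)) (hQP : IsZero (Q ⊗ P)) :
    IsIso ((a ▷ P) ≫ (λ_ P).hom) ∧ IsIso ((P ◁ a) ≫ (ρ_ P).hom) ∧
      IsIso ((λ_ Q).inv ≫ (b ▷ Q)) ∧ IsIso ((ρ_ Q).inv ≫ (Q ◁ b)) := by
  have h1 : IsIso (a ▷ P) := by
    have := (tensorRight P).map_distinguished _ hT
    exact Triangle.isZero₃_iff_isIso₁ _ this |>.1 hQP
  have h2 : IsIso (P ◁ a) := by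
    have := (tensorLeft P).map_distinguished _ hT
    exact Triangle.isZero₃_iff_isIso₁ _ this |>.1 hPQ
  have h3 : IsIso (b ▷ Q) := by
    have := (tensorRight Q).map_distinguished _ hT
    exact Triangle.isZero₁_iff_isIso₂ _ this |>.1 hPQ
  have h4 : IsIso (Q ◁ b) := by
    have := (tensorLeft Q).map_distinguished _ hT
    exact Triangle.isZero₁_iff_isIso₂ _ this |>.1 hQP
  exact ⟨inferInstance, inferInstance, inferInstance, inferInstance⟩
end

section
/- Let C, P, Q, a, b be as in the context. For every integer ℓ ≥ 1 there are isomorphisms P^{⊗ℓ} ≅ P and Q ≅ Q^{⊗ℓ}, where the tensor powers are defined inductively by P^{⊗1} = P and P^{⊗(ℓ+1)} = P^{⊗ℓ} ⊗ P (and similarly for Q). (Abstract form of the Corollary on idempotence of microlocal kernels: P_U^{⋆ℓ} ≅ P_U and Q_U ≅ Q_U^{⋆ℓ}.) -/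
/-!
Abstract form of the Corollary on idempotence of microlocal kernels:
`P_U^{⋆ℓ} ≅ P_U` and `Q_U ≅ Q_U^{⋆ℓ}` for all `ℓ ≥ 1`.

`iteratedTensor P n` is the tensor power `P^{⊗(n+1)}`, defined inductively by
`P^{⊗1} = P` and `P^{⊗(ℓ+1)} = P^{⊗ℓ} ⊗ P`.
-/

open CategoryTheory Category Limits Pretriangulated MonoidalCategory

/-- `iteratedTensor P n = P^{⊗(n+1)}`: the `(n+1)`-st tensor power of `P`,
with `P^{⊗1} = P` and `P^{⊗(ℓ+1)} = P^{⊗ℓ} ⊗ P`. -/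
def iteratedTensor {C : Type*} [Category C] [MonoidalCategory C] (P : C) : ℕ → C
  | 0 => P
  | n + 1 => iteratedTensor P n ⊗ P

theorem microlocal_kernel_iterated_idempotence
    {C : Type*} [Category C] [MonoidalCategory C]
    [Preadditive C] [HasZeroObject C] [HasShift C ℤ]
    [∀ n : ℤ, (shiftFunctor C n).Additive] [Pretriangulated C]
    [∀ X : C, (tensorLeft X).CommShift ℤ] [∀ X : C, (tensorRight X).CommShift ℤ]
    [∀ X : C, (tensorLeft X).IsTriangulated] [∀ X : C, (tensorRight X).IsTriangulated]
    (P Q : C) (a : P ⟶ 𝟙_ C) (b : 𝟙_ C ⟶ Q) (δ : Q ⟶ P⟦(1 : ℤ)⟧)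
    (hT : Triangle.mk a b δ ∈ distTriang C)
    (hPQ : IsZero (P ⊗ Q)) (hQP : IsZero (Q ⊗ P)) :
    ∀ ℓ : ℕ, 1 ≤ ℓ →
      Nonempty (iteratedTensor P (ℓ - 1) ≅ P) ∧ Nonempty (Q ≅ iteratedTensor Q (ℓ - 1)) := by
  -- tensor the triangle on the left with P
  have hTP : (tensorLeft P).mapTriangle.obj (Triangle.mk a b δ) ∈ distTriang C :=
    (tensorLeft P).map_distinguished _ hT
  have hPP : IsIso (P ◁ a) := by
    have := (Triangle.isZero₃_iff_isIso₁ _ hTP).1 hPQ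
    exact this
  have ePP : P ⊗ P ≅ P := (asIso (P ◁ a)) ≪≫ (ρ_ P)
  -- tensor the triangle on the left with Q
  have hTQ : (tensorLeft Q).mapTriangle.obj (Triangle.mk a b δ) ∈ distTriang C :=
    (tensorLeft Q).map_distinguished _ hT
  have hQQ : IsIso (Q ◁ b) := by
    have := (Triangle.isZero₁_iff_isIso₂ _ hTQ).1 hQP
    exact this
  have eQQ : Q ≅ Q ⊗ Q := (ρ_ Q).symm ≪≫ asIso (Q ◁ b)
  have hP : ∀ n : ℕ, Nonempty (iteratedTensor P n ≅ P) := by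
    intro n
    induction n with
    | zero => exact ⟨Iso.refl P⟩
    | succ n ih =>
      obtain ⟨e⟩ := ih
      exact ⟨(tensorIso e (Iso.refl P)) ≪≫ ePP⟩
  have hQ : ∀ n : ℕ, Nonempty (Q ≅ iteratedTensor Q n) := by
    intro n
    induction n with
    | zero => exact ⟨Iso.refl Q⟩
    | succ n ih =>
      obtain ⟨e⟩ := ih
      exact ⟨eQQ ≪≫ tensorIso e (Iso.refl Q)⟩
  intro ℓ _
  exact ⟨hP _, hQ _⟩
end

section
/- Let C, P, Q, a, b be as in the context. For all objects X and Y of C, every morphism X ⊗ P → Y ⊗ Q is zero; that is, Hom_C(X ⊗ P, Y ⊗ Q) = 0. (This is the orthogonality between the P-part and the Q-part of the decomposition induced by microlocal kernels.) -/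
open CategoryTheory Category Limits Pretriangulated MonoidalCategory

/-- Up to unitors `f` is `f ▷ 𝟙`, and `X ◁ a ≫ f ▷ 𝟙 = f ▷ P ≫ Y ◁ a = 0`. -/
theorem eq_zero_of_epi_whiskerLeft_of_isZero_tensor {C : Type*} [Category C]
    [MonoidalCategory C] [HasZeroMorphisms C] {P X Y : C} (a : P ⟶ 𝟙_ C) [Epi (X ◁ a)]
    (hY : IsZero (Y ⊗ P)) (f : X ⟶ Y) : f = 0 := by
  have hfP : f ▷ P = 0 := hY.eq_of_tgt _ _
  have hf₁ : f ▷ 𝟙_ C = 0 := by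
    rw [← cancel_epi (X ◁ a), whisker_exchange, hfP, zero_comp, comp_zero]
  rw [whiskerRight_id] at hf₁
  simpa using (ρ_ X).inv ≫= hf₁ =≫ (ρ_ Y).hom

theorem isIso_whiskerLeft_of_isZero_tensor {C : Type*} [Category C] [MonoidalCategory C]
    [Preadditive C] [HasZeroObject C] [HasShift C ℤ]
    [∀ n : ℤ, (shiftFunctor C n).Additive] [Pretriangulated C]
    [∀ X : C, (tensorLeft X).CommShift ℤ] [∀ X : C, (tensorLeft X).IsTriangulated]
    {P Q : C} {a : P ⟶ 𝟙_ C} {b : 𝟙_ C ⟶ Q} {δ : Q ⟶ P⟦(1 : ℤ)⟧}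
    (hT : Triangle.mk a b δ ∈ distTriang C) {Z : C} (hZ : IsZero (Z ⊗ Q)) :
    IsIso (Z ◁ a) :=
  (Triangle.isZero₃_iff_isIso₁ _ ((tensorLeft Z).map_distinguished _ hT)).1 hZ

theorem microlocal_kernel_orthogonality
    {C : Type*} [Category C] [MonoidalCategory C]
    [Preadditive C] [HasZeroObject C] [HasShift C ℤ]
    [∀ n : ℤ, (shiftFunctor C n).Additive] [Pretriangulated C]
    [∀ X : C, (tensorLeft X).CommShift ℤ] [∀ X : C, (tensorRight X).CommShift ℤ]
    [∀ X : C, (tensorLeft X).IsTriangulated] [∀ X : C, (tensorRight X).IsTriangulated]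
    (P Q : C) (a : P ⟶ 𝟙_ C) (b : 𝟙_ C ⟶ Q) (δ : Q ⟶ P⟦(1 : ℤ)⟧)
    (hT : Triangle.mk a b δ ∈ distTriang C)
    (hPQ : IsZero (P ⊗ Q)) (hQP : IsZero (Q ⊗ P)) :
    ∀ (X Y : C) (f : X ⊗ P ⟶ Y ⊗ Q), f = 0 := by
  intro X Y f
  have hXPQ : IsZero ((X ⊗ P) ⊗ Q) := ((tensorLeft X).map_isZero hPQ).of_iso (α_ X P Q)
  have hYQP : IsZero ((Y ⊗ Q) ⊗ P) := ((tensorLeft Y).map_isZero hQP).of_iso (α_ Y Q P)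
  have := isIso_whiskerLeft_of_isZero_tensor hT hXPQ
  exact eq_zero_of_epi_whiskerLeft_of_isZero_tensor a hYQP f
end

section
/- Let C, P, Q, a, b be as in the context. For all objects F and G of C, post-composition with ρ_G ∘ (id_G ⊗ a) : G ⊗ P → G ⊗ 𝟙 → G induces a bijection Hom_C(F ⊗ P, G ⊗ P) ≅ Hom_C(F ⊗ P, G). (Abstract form of Lemma 2.8(2): Hom(F ⋆ P_U, G ⋆ P_U) ≅ Hom(F ⋆ P_U, G).) -/
/-!
Tensoring the triangle `P ⟶ 𝟙 ⟶ Q ⟶ P⟦1⟧` with `G` gives a distinguished triangle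
`G ⊗ P ⟶ G ⟶ G ⊗ Q ⟶ (G ⊗ P)⟦1⟧`, so by the long exact `Hom`-sequence it suffices that
`Hom(F ⊗ P, G ⊗ Q)` and `Hom((F ⊗ P)⟦1⟧, G ⊗ Q)` vanish. Every morphism `f : A ⊗ P ⟶ B ⊗ Q`
vanishes: `f ▷ P` lands in `B ⊗ (Q ⊗ P) ≅ 0`, and `(A ⊗ P) ◁ a` is invertible because
`A ⊗ (P ⊗ Q) ≅ 0`, so by the interchange law `f ▷ 𝟙 ≅ f` vanishes too. The shifted case
reduces to this one since `(F ⊗ P)⟦1⟧ ≅ F⟦1⟧ ⊗ P`.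
-/

open CategoryTheory Category Limits Pretriangulated MonoidalCategory

namespace CategoryTheory

section Pretriangulated

variable {C : Type*} [Category C] [Preadditive C] [HasZeroObject C] [HasShift C ℤ]
  [∀ n : ℤ, (shiftFunctor C n).Additive] [Pretriangulated C]

lemma Pretriangulated.bijective_comp_mor₁ {T : Triangle C} (hT : T ∈ distTriang C) {W : C}
    (h₃ : ∀ g : W ⟶ T.obj₃, g = 0) (h₃' : ∀ g : W⟦(1 : ℤ)⟧ ⟶ T.obj₃, g = 0) :
    Function.Bijective (fun f : W ⟶ T.obj₁ => f ≫ T.mor₁) := by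
  refine ⟨fun f₁ f₂ h => ?_, fun g => ?_⟩
  · have hf : (f₁ - f₂) ≫ T.mor₁ = 0 := by rw [Preadditive.sub_comp]; exact sub_eq_zero.2 h
    obtain ⟨g, hg⟩ := Triangle.coyoneda_exact₁ T hT ((f₁ - f₂)⟦(1 : ℤ)⟧')
      (by rw [← Functor.map_comp, hf, Functor.map_zero])
    rw [← sub_eq_zero]
    apply (shiftFunctor C (1 : ℤ)).map_injective
    rw [hg, h₃' g, zero_comp, Functor.map_zero]
  · obtain ⟨f, hf⟩ := Triangle.coyoneda_exact₂ T hT g (h₃ _)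
    exact ⟨f, hf.symm⟩

end Pretriangulated

namespace MonoidalCategory

variable {C : Type*} [Category C] [MonoidalCategory C]

lemma eq_zero_of_whiskerRight_eq_zero [HasZeroMorphisms C] {P X Y : C} (a : P ⟶ 𝟙_ C)
    [IsIso (X ◁ a)] (f : X ⟶ Y) (hf : f ▷ P = 0) : f = 0 := by
  have h : f ▷ 𝟙_ C = 0 := by
    rw [← cancel_epi (X ◁ a), whisker_exchange, hf, zero_comp, comp_zero]
  rw [whiskerRight_id] at h
  simpa using (ρ_ X).inv ≫= h =≫ (ρ_ Y).hom

variable [Preadditive C] [HasZeroObject C] [HasShift C ℤ]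
  [∀ n : ℤ, (shiftFunctor C n).Additive] [Pretriangulated C]
  [∀ X : C, (tensorLeft X).CommShift ℤ] [∀ X : C, (tensorLeft X).IsTriangulated]

lemma isIso_whiskerLeft_mor₁ {T : Triangle C} (hT : T ∈ distTriang C) (X : C)
    (hX : IsZero (X ⊗ T.obj₃)) : IsIso (X ◁ T.mor₁) :=
  (Triangle.isZero₃_iff_isIso₁ _ ((tensorLeft X).map_distinguished _ hT)).1 hX

lemma hom_tensor_to_tensor_eq_zero {P Q : C} {a : P ⟶ 𝟙_ C} {b : 𝟙_ C ⟶ Q}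
    {δ : Q ⟶ P⟦(1 : ℤ)⟧} (hT : Triangle.mk a b δ ∈ distTriang C)
    (hPQ : IsZero (P ⊗ Q)) (hQP : IsZero (Q ⊗ P)) {A B : C} (f : A ⊗ P ⟶ B ⊗ Q) :
    f = 0 := by
  have : IsIso ((A ⊗ P) ◁ a) := isIso_whiskerLeft_mor₁ hT (A ⊗ P)
    (((tensorLeft A).map_isZero hPQ).of_iso (α_ A P Q))
  refine eq_zero_of_whiskerRight_eq_zero a f ?_
  exact (((tensorLeft B).map_isZero hQP).of_iso (α_ B Q P)).eq_of_tgt _ _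

end MonoidalCategory

end CategoryTheory

theorem microlocal_kernel_hom_bijection
    {C : Type*} [Category C] [MonoidalCategory C]
    [Preadditive C] [HasZeroObject C] [HasShift C ℤ]
    [∀ n : ℤ, (shiftFunctor C n).Additive] [Pretriangulated C]
    [∀ X : C, (tensorLeft X).CommShift ℤ] [∀ X : C, (tensorRight X).CommShift ℤ]
    [∀ X : C, (tensorLeft X).IsTriangulated] [∀ X : C, (tensorRight X).IsTriangulated]
    (P Q : C) (a : P ⟶ 𝟙_ C) (b : 𝟙_ C ⟶ Q) (δ : Q ⟶ P⟦(1 : ℤ)⟧)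
    (hT : Triangle.mk a b δ ∈ distTriang C)
    (hPQ : IsZero (P ⊗ Q)) (hQP : IsZero (Q ⊗ P)) :
    ∀ F G : C,
      Function.Bijective (fun f : F ⊗ P ⟶ G ⊗ P => f ≫ ((G ◁ a) ≫ (ρ_ G).hom)) := by
  intro F G
  have hvanish {A B : C} (f : A ⊗ P ⟶ B ⊗ Q) : f = 0 :=
    hom_tensor_to_tensor_eq_zero hT hPQ hQP f
  have hshift (g : (F ⊗ P)⟦(1 : ℤ)⟧ ⟶ G ⊗ Q) : g = 0 := by
    let e := ((tensorRight P).commShiftIso (1 : ℤ)).app F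
    exact (cancel_epi e.hom).1 (by rw [comp_zero]; exact hvanish _)
  have hG := bijective_comp_mor₁ ((tensorLeft G).map_distinguished _ hT) hvanish hshift
  have hsplit : (fun f : F ⊗ P ⟶ G ⊗ P => f ≫ ((G ◁ a) ≫ (ρ_ G).hom)) =
      (fun f => f ≫ (ρ_ G).hom) ∘ (fun f => f ≫ G ◁ a) :=
    funext fun f => (assoc _ _ _).symm
  rw [hsplit]
  exact (ρ_ G).homToEquiv.bijective.comp hG
end

section
/- Let C, P, Q, a, b be as in the context. For all objects F and G of C, if G ⊗ P ≅ 0 then Hom_C(F ⊗ P, G) = 0. (This is the semiorthogonality property underlying the orthogonal decomposition of the Tamarkin category determined by the microlocal kernels: objects of the form F ⋆ P_U are left orthogonal to objects killed by ⋆ P_U.) -/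
/-!
Semiorthogonality underlying the orthogonal decomposition of the Tamarkin category:
with `P ⟶ 𝟙 ⟶ Q ⟶ P⟦1⟧` distinguished, `P ⊗ Q ≅ 0`, `Q ⊗ P ≅ 0`, if `G ⊗ P ≅ 0`
then every morphism `F ⊗ P ⟶ G` is zero.
-/

open CategoryTheory Category Limits Pretriangulated MonoidalCategory

theorem microlocal_kernel_semiorthogonality
    {C : Type*} [Category C] [MonoidalCategory C]
    [Preadditive C] [HasZeroObject C] [HasShift C ℤ]
    [∀ n : ℤ, (shiftFunctor C n).Additive] [Pretriangulated C]
    [∀ X : C, (tensorLeft X).CommShift ℤ] [∀ X : C, (tensorRight X).CommShift ℤ]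
    [∀ X : C, (tensorLeft X).IsTriangulated] [∀ X : C, (tensorRight X).IsTriangulated]
    (P Q : C) (a : P ⟶ 𝟙_ C) (b : 𝟙_ C ⟶ Q) (δ : Q ⟶ P⟦(1 : ℤ)⟧)
    (hT : Triangle.mk a b δ ∈ distTriang C)
    (hPQ : IsZero (P ⊗ Q)) (hQP : IsZero (Q ⊗ P)) :
    ∀ F G : C, IsZero (G ⊗ P) → ∀ f : F ⊗ P ⟶ G, f = 0 := by
  intro F G hG f
  -- The image of the triangle under `tensorLeft P` is distinguished with zero third object,
  -- hence `P ◁ a` is an isomorphism.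
  have hTP := (tensorLeft P).map_distinguished _ hT
  have hiso : IsIso (P ◁ a) :=
    (Triangle.isZero₃_iff_isIso₁ _ hTP).1 hPQ
  have hiso2 : IsIso ((F ⊗ P) ◁ a) := by
    have : (F ⊗ P) ◁ a = (α_ F P P).hom ≫ F ◁ (P ◁ a) ≫ (α_ F P (𝟙_ C)).inv := by
      simp
    rw [this]
    infer_instance
  have h0 : f ▷ P = 0 := hG.eq_of_tgt _ 0
  have hex : (F ⊗ P) ◁ a ≫ f ▷ (𝟙_ C) = f ▷ P ≫ G ◁ a := whisker_exchange f a
  rw [h0, zero_comp] at hex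
  have : (F ⊗ P) ◁ a ≫ (ρ_ (F ⊗ P)).hom ≫ f ≫ (ρ_ G).inv = 0 := by
    rw [← hex]
    congr 1
    simp [← MonoidalCategory.whiskerRight_id_symm]
  have := this =≫ (ρ_ G).hom
  simpa using this
end

section
/- With the data of the context, the following hold: (i) the triple (A, b, 𝒩 ∘ s ∘ θ) is a mixed complex, i.e. (𝒩sθ)² = 0 and b ∘ (𝒩sθ) + (𝒩sθ) ∘ b = 0; (ii) the map φ : A → Cone (where Coneᵐ = Aᵐ ⊕ A^{m−1}, b̄(x, y) = (b x, θ x − b′ y), B̄(x, y) = (𝒩 y, 0)) given by φ(x) = (x, s θ x) is a morphism of mixed complexes, i.e. b̄ ∘ φ = φ ∘ b and B̄ ∘ φ = φ ∘ (𝒩sθ); (iii) φ is a quasi-isomorphism of the underlying cochain complexes, inducing an isomorphism H*(A, b) ≅ H*(Cone, b̄). (This is the comparison, for data coming from a cocyclic object with extra degeneracy s, between the small mixed complex (Tot, b, B) and the cyclic cone mixed complex.) -/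
/-!
Comparison, for data coming from a cocyclic object with extra degeneracy `s`, between the
small mixed complex `(A, b, 𝒩sθ)` and the cyclic cone mixed complex `(Cone, b̄, B̄)`.

`A : ℤ → Type*` is a ℤ-graded `R`-module; `b`, `b'` are degree `+1` operators squaring to
zero; `θ`, `𝒩` are degree `0` operators with `θ ∘ b = b' ∘ θ`, `b ∘ 𝒩 = 𝒩 ∘ b'`,
`𝒩 ∘ θ = 0`, `θ ∘ 𝒩 = 0`; and `s` is a degree `-1` operator with `b' ∘ s + s ∘ b' = id`.

Claims:
(i)  `(A, b, 𝒩sθ)` is a mixed complex: `(𝒩sθ)² = 0` and `b(𝒩sθ) + (𝒩sθ)b = 0`;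
(ii) `φ(x) = (x, sθx)` is a morphism of mixed complexes `(A, b, 𝒩sθ) → (Cone, b̄, B̄)`;
(iii) `φ` is a quasi-isomorphism, inducing an isomorphism `H*(A, b) ≅ H*(Cone, b̄)`
      (stated concretely: surjectivity and injectivity on cohomology classes).
-/

/-- Transport along an equality of degrees. -/
def castA (A : ℤ → Type*) {m m' : ℤ} (h : m = m') (x : A m) : A m' := h ▸ x

/-- `ConeC A m = Aᵐ ⊕ A^{m-1}`. -/
abbrev ConeC (A : ℤ → Type*) (m : ℤ) : Type _ := A m × A (m - 1)

/-- Transport along an equality of degrees, for the cone. -/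
def castCone (A : ℤ → Type*) {m m' : ℤ} (h : m = m') (z : ConeC A m) : ConeC A m' :=
  h ▸ z

section Ops

variable {R : Type*} [Ring R] (A : ℤ → Type*)
  [∀ m, AddCommGroup (A m)] [∀ m, Module R (A m)]

/-- The degree `+1` operator `b̄(x, y) = (b x, θ x - b' y)` on the cone. -/
def bBar (b b' : ∀ m : ℤ, A m →ₗ[R] A (m + 1)) (θ : ∀ m : ℤ, A m →ₗ[R] A m) (m : ℤ)
    (z : ConeC A m) : ConeC A (m + 1) :=
  (b m z.1,
    castA A (show m = m + 1 - 1 by omega) (θ m z.1) -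
      castA A (show m - 1 + 1 = m + 1 - 1 by omega) (b' (m - 1) z.2))

/-- The degree `-1` operator `B̄(x, y) = (𝒩 y, 0)` on the cone. -/
def BBar (𝒩 : ∀ m : ℤ, A m →ₗ[R] A m) (m : ℤ) (z : ConeC A m) : ConeC A (m - 1) :=
  (𝒩 (m - 1) z.2, 0)

/-- The degree `-1` operator `𝒩 ∘ s ∘ θ` on `A`. -/
def cyclicB (𝒩 θ : ∀ m : ℤ, A m →ₗ[R] A m) (s : ∀ m : ℤ, A m →ₗ[R] A (m - 1)) (m : ℤ)
    (x : A m) : A (m - 1) :=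
  𝒩 (m - 1) (s m (θ m x))

/-- The comparison map `φ(x) = (x, s θ x)`. -/
def phiMap (θ : ∀ m : ℤ, A m →ₗ[R] A m) (s : ∀ m : ℤ, A m →ₗ[R] A (m - 1)) (m : ℤ)
    (x : A m) : ConeC A m :=
  (x, s m (θ m x))

end Ops

section CastLemmas

variable {R : Type*} [Ring R] (A : ℤ → Type*)
  [∀ m, AddCommGroup (A m)] [∀ m, Module R (A m)]

lemma castA_self {m : ℤ} (h : m = m) (x : A m) : castA A h x = x := rfl

lemma castA_castA {m1 m2 m3 : ℤ} (h1 : m1 = m2) (h2 : m2 = m3) (x : A m1) :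
    castA A h2 (castA A h1 x) = castA A (h1.trans h2) x := by subst h1; subst h2; rfl

lemma castA_zero {m m' : ℤ} (h : m = m') : castA A h (0 : A m) = 0 := by subst h; rfl

lemma castA_add {m m' : ℤ} (h : m = m') (x y : A m) :
    castA A h (x + y) = castA A h x + castA A h y := by subst h; rfl

lemma castA_neg {m m' : ℤ} (h : m = m') (x : A m) :
    castA A h (-x) = -castA A h x := by subst h; rfl

lemma castA_deg0 (f : ∀ m : ℤ, A m →ₗ[R] A m) {m m' : ℤ} (h : m = m') (x : A m) :
    castA A h (f m x) = f m' (castA A h x) := by subst h; rfl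

lemma castA_degp (f : ∀ m : ℤ, A m →ₗ[R] A (m + 1)) {m m' : ℤ} (h : m = m')
    (h2 : m + 1 = m' + 1) (x : A m) :
    castA A h2 (f m x) = f m' (castA A h x) := by subst h; rfl

lemma castA_degm (f : ∀ m : ℤ, A m →ₗ[R] A (m - 1)) {m m' : ℤ} (h : m = m')
    (h2 : m - 1 = m' - 1) (x : A m) :
    castA A h2 (f m x) = f m' (castA A h x) := by subst h; rfl

lemma castCone_eq {m m' : ℤ} (h : m = m') (z : ConeC A m) :
    castCone A h z = (castA A h z.1, castA A (by rw [h]) z.2) := by subst h; rfl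

end CastLemmas

theorem small_mixed_complex_comparison
    {R : Type*} [Ring R] (A : ℤ → Type*)
    [∀ m, AddCommGroup (A m)] [∀ m, Module R (A m)]
    (b b' : ∀ m : ℤ, A m →ₗ[R] A (m + 1))
    (θ 𝒩 : ∀ m : ℤ, A m →ₗ[R] A m)
    (s : ∀ m : ℤ, A m →ₗ[R] A (m - 1))
    (hb : ∀ (m : ℤ) (x : A m), b (m + 1) (b m x) = 0)
    (hb' : ∀ (m : ℤ) (x : A m), b' (m + 1) (b' m x) = 0)
    (hθb : ∀ (m : ℤ) (x : A m), θ (m + 1) (b m x) = b' m (θ m x))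
    (hb𝒩 : ∀ (m : ℤ) (x : A m), b m (𝒩 m x) = 𝒩 (m + 1) (b' m x))
    (h𝒩θ : ∀ (m : ℤ) (x : A m), 𝒩 m (θ m x) = 0)
    (hθ𝒩 : ∀ (m : ℤ) (x : A m), θ m (𝒩 m x) = 0)
    -- `b' ∘ s + s ∘ b' = id`
    (hs : ∀ (m : ℤ) (x : A m),
      castA A (show m - 1 + 1 = m by omega) (b' (m - 1) (s m x)) +
        castA A (show m + 1 - 1 = m by omega) (s (m + 1) (b' m x)) = x) :
    -- (i) `(A, b, 𝒩sθ)` is a mixed complex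
    (∀ (m : ℤ) (x : A m), cyclicB A 𝒩 θ s (m - 1) (cyclicB A 𝒩 θ s m x) = 0) ∧
    (∀ (m : ℤ) (x : A m),
      castA A (show m - 1 + 1 = m by omega) (b (m - 1) (cyclicB A 𝒩 θ s m x)) +
        castA A (show m + 1 - 1 = m by omega) (cyclicB A 𝒩 θ s (m + 1) (b m x)) = 0) ∧
    -- (ii) `φ` is a morphism of mixed complexes
    (∀ (m : ℤ) (x : A m),
      bBar A b b' θ m (phiMap A θ s m x) = phiMap A θ s (m + 1) (b m x)) ∧
    (∀ (m : ℤ) (x : A m),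
      BBar A 𝒩 m (phiMap A θ s m x) = phiMap A θ s (m - 1) (cyclicB A 𝒩 θ s m x)) ∧
    -- (iii) `φ` is a quasi-isomorphism: surjectivity on cohomology …
    (∀ (m : ℤ) (c : ConeC A m), bBar A b b' θ m c = 0 →
      ∃ x : A m, b m x = 0 ∧
        ∃ c' : ConeC A (m - 1),
          castCone A (show m - 1 + 1 = m by omega) (bBar A b b' θ (m - 1) c') =
            c - phiMap A θ s m x) ∧
    -- … and injectivity on cohomology
    (∀ (m : ℤ) (x : A m), b m x = 0 →
      (∃ c' : ConeC A (m - 1),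
        castCone A (show m - 1 + 1 = m by omega) (bBar A b b' θ (m - 1) c') =
          phiMap A θ s m x) →
      ∃ x' : A (m - 1), castA A (show m - 1 + 1 = m by omega) (b (m - 1) x') = x) := by
  refine ⟨?_, ?_, ?_, ?_, ?_, ?_⟩
  · -- (i) B² = 0
    intro m x
    show 𝒩 _ (s _ (θ _ (𝒩 _ (s m (θ m x))))) = 0
    rw [hθ𝒩, map_zero, map_zero]
  · -- (i) bB + Bb = 0
    intro m x
    have e1 : castA A (show m - 1 + 1 = m by omega) (b (m - 1) (cyclicB A 𝒩 θ s m x)) =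
        𝒩 m (castA A (show m - 1 + 1 = m by omega) (b' (m - 1) (s m (θ m x)))) := by
      show castA A _ (b (m - 1) (𝒩 (m - 1) (s m (θ m x)))) = _
      rw [hb𝒩, castA_deg0 (R := R)]
    have e2 : castA A (show m + 1 - 1 = m by omega) (cyclicB A 𝒩 θ s (m + 1) (b m x)) =
        𝒩 m (castA A (show m + 1 - 1 = m by omega) (s (m + 1) (b' m (θ m x)))) := by
      show castA A _ (𝒩 (m + 1 - 1) (s (m + 1) (θ (m + 1) (b m x)))) = _
      rw [hθb, castA_deg0 (R := R)]
    rw [e1, e2, ← map_add, hs, h𝒩θ]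
  · -- (ii) b̄ ∘ φ = φ ∘ b
    intro m x
    refine Prod.ext rfl ?_
    show castA A (show m = m + 1 - 1 by omega) (θ m x) -
        castA A (show m - 1 + 1 = m + 1 - 1 by omega) (b' (m - 1) (s m (θ m x))) =
        s (m + 1) (θ (m + 1) (b m x))
    rw [hθb]
    have h' := congrArg (castA A (show m = m + 1 - 1 by omega)) (hs m (θ m x))
    rw [castA_add, castA_castA, castA_castA, castA_self] at h'
    have hp : castA A (show m - 1 + 1 = m + 1 - 1 by omega) (b' (m - 1) (s m (θ m x))) =
        castA A ((show m - 1 + 1 = m by omega).trans (show m = m + 1 - 1 by omega))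
          (b' (m - 1) (s m (θ m x))) := rfl
    rw [hp, sub_eq_iff_eq_add', h'.symm]
  · -- (ii) B̄ ∘ φ = φ ∘ B
    intro m x
    refine Prod.ext rfl ?_
    show (0 : A (m - 1 - 1)) = s (m - 1) (θ (m - 1) (𝒩 (m - 1) (s m (θ m x))))
    rw [hθ𝒩, map_zero]
  · -- (iii) surjectivity on cohomology
    rintro m ⟨x, y⟩ hc
    have hc1 : b m x = 0 := congrArg Prod.fst hc
    have hc2 : castA A (show m = m + 1 - 1 by omega) (θ m x) -
        castA A (show m - 1 + 1 = m + 1 - 1 by omega) (b' (m - 1) y) = 0 :=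
      congrArg Prod.snd hc
    have hθx : θ m x = castA A (show m - 1 + 1 = m by omega) (b' (m - 1) y) := by
      have := sub_eq_zero.1 hc2
      have h2 := congrArg (castA A (show m + 1 - 1 = m by omega)) this
      rw [castA_castA, castA_castA, castA_self] at h2
      exact h2
    refine ⟨x, hc1, (0, -(s (m - 1) y)), ?_⟩
    rw [castCone_eq]
    refine Prod.ext ?_ ?_
    · show castA A _ (b (m - 1) 0) = (x, y).1 - x
      rw [map_zero, castA_zero, sub_self]
    · show castA A _ (castA A _ (θ (m - 1) (0 : A (m - 1))) -
        castA A _ (b' (m - 1 - 1) (-(s (m - 1) y)))) = (x, y).2 - s m (θ m x)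
      rw [map_zero, castA_zero, map_neg, castA_neg, zero_sub, neg_neg, castA_castA]
    -- now reduce to the homotopy identity at `y`
      have hsy := hs (m - 1) y
      have hsθx : s m (θ m x) =
          castA A (show m - 1 + 1 - 1 = m - 1 by omega) (s (m - 1 + 1) (b' (m - 1) y)) := by
        rw [hθx]
        exact (castA_degm A s (show m - 1 + 1 = m by omega)
          (show m - 1 + 1 - 1 = m - 1 by omega) _).symm
      rw [hsθx]
      have hp : castA A ((show m - 1 - 1 + 1 = m - 1 + 1 - 1 by omega).trans
            (show m - 1 + 1 - 1 = m - 1 by omega)) (b' (m - 1 - 1) (s (m - 1) y)) =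
          castA A (show m - 1 - 1 + 1 = m - 1 by omega) (b' (m - 1 - 1) (s (m - 1) y)) := rfl
      rw [hp, eq_sub_iff_add_eq]
      exact hsy
  · -- (iii) injectivity on cohomology
    rintro m x hbx ⟨⟨u, v⟩, hc⟩
    rw [castCone_eq] at hc
    exact ⟨u, congrArg Prod.fst hc⟩
end
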